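/- arXiv:math/0312530 — 2 statements merged into one kernel-verified Lean document; each statement's English description precedes it below -/
import Mathlib

section
/- Let Γ be a 3-valent graph of genus g with x ends. The space of parameterized tropical curves h : Γ → ℝⁿ in a fixed combinatorial type, up to equivalence, is an open convex polyhedral domain in a real affine space of dimension k with k ≥ x + (n-3)(1-g). -/
open Finset

/-- The space of parameterized tropical curves `h : Γ → ℝⁿ` in a fixed combinatorial
type: the graph `Γ` (vertices `V`, bounded oriented edges `E` with endpoints
`src`, `tgt`, ends `L`) and the primitive direction vectors `dir` of the bounded edges
are fixed, and the curve is determined by the positions of the vertices, each bounded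
edge being mapped onto a nondegenerate segment in the direction `dir e`. -/
def modOfType {V E : Type} (n : ℕ) (src tgt : E → V) (dir : E → Fin n → ℤ) :
    Set (V → Fin n → ℝ) :=
  {pos | ∀ e : E, ∃ t : ℝ, 0 < t ∧
    ∀ i, pos (tgt e) i - pos (src e) i = t * (dir e i : ℝ)}

/-!
A curve of the fixed type is its vector of vertex positions `pos : V → ℝⁿ`, and the
condition at an edge `e` is that `pos (tgt e) - pos (src e)` lies on the open ray through
`dir e`. Choosing a functional `φ e` with `φ e (dir e) = 1`, this splits into the linear
condition "lies on the line `ℝ ∙ dir e`" and the strict inequality `0 < φ e (…)`; so the space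
is a linear subspace `S` cut by finitely many open half-spaces. Each line condition has
codimension `n - 1`, whence `dim S ≥ n |V| - (n - 1) |E|`, and trivalence `2 |E| + x = 3 |V|`
together with `g = |E| - |V| + 1` turns the right-hand side into exactly `x + (n - 3)(1 - g)`.
-/

theorem two_mul_card_add_card_eq_of_valence {V E L : Type*} [Fintype V] [Fintype E]
    [Fintype L] [DecidableEq V] (src tgt : E → V) (leg : L → V) (k : ℕ)
    (hk : ∀ v : V,
      (univ.filter fun e : E => src e = v).card +
          (univ.filter fun e : E => tgt e = v).card +
        (univ.filter fun l : L => leg l = v).card = k) :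
    2 * Fintype.card E + Fintype.card L = k * Fintype.card V := by
  have := sum_congr rfl fun v (_ : v ∈ univ) => hk v
  rw [sum_add_distrib, sum_add_distrib,
    ← card_eq_sum_card_fiberwise fun e _ => mem_univ (src e),
    ← card_eq_sum_card_fiberwise fun e _ => mem_univ (tgt e),
    ← card_eq_sum_card_fiberwise fun l _ => mem_univ (leg l)] at this
  simp only [sum_const, card_univ, smul_eq_mul] at this
  linarith

theorem intCast_ne_zero_of_forall_dvd_isUnit {ι R : Type*} [AddGroupWithOne R] [CharZero R]
    {v : ι → ℤ} (hv : ∀ c : ℤ, (∀ i, c ∣ v i) → IsUnit c) : (fun i => (v i : R)) ≠ 0 := by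
  intro h
  have : IsUnit (2 : ℤ) := hv 2 fun i => by simp [show v i = 0 by simpa using congrFun h i]
  simp [Int.isUnit_iff] at this

theorem exists_pos_smul_eq_iff_mem_span_and_pos {K M : Type*} [Semiring K] [LinearOrder K]
    [AddCommMonoid M] [Module K M] {φ : Module.Dual K M} {v : M} (hφ : φ v = 1)
    (w : M) : (∃ t : K, 0 < t ∧ w = t • v) ↔ w ∈ K ∙ v ∧ 0 < φ w := by
  constructor
  · rintro ⟨t, ht, rfl⟩
    exact ⟨Submodule.smul_mem _ t (Submodule.mem_span_singleton_self v), by simpa [hφ]⟩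
  · rintro ⟨hw, hpos⟩
    obtain ⟨a, rfl⟩ := Submodule.mem_span_singleton.mp hw
    exact ⟨a, by simpa [hφ] using hpos, rfl⟩

theorem isOpen_convex_setOf_forall_pos {ι N : Type*} [Finite ι] [NormedAddCommGroup N]
    [NormedSpace ℝ N] [FiniteDimensional ℝ N] (ψ : ι → Module.Dual ℝ N) :
    IsOpen {x | ∀ i, 0 < ψ i x} ∧ Convex ℝ {x | ∀ i, 0 < ψ i x} := by
  rw [Set.ofPred_forall]
  exact ⟨isOpen_iInter_of_finite fun i =>
      isOpen_lt continuous_const (ψ i).continuous_of_finiteDimensional,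
    convex_iInter fun i => convex_halfSpace_gt (ψ i).isLinear 0⟩

theorem Submodule.finrank_le_finrank_iInf_comap_add_sum {ι K N : Type*} {M : ι → Type*}
    [Fintype ι] [Field K] [AddCommGroup N] [Module K N] [FiniteDimensional K N]
    [∀ i, AddCommGroup (M i)] [∀ i, Module K (M i)] [∀ i, FiniteDimensional K (M i)]
    (f : ∀ i, N →ₗ[K] M i) (p : ∀ i, Submodule K (M i)) :
    Module.finrank K N ≤
      Module.finrank K ↥(⨅ i, (p i).comap (f i)) + ∑ i, Module.finrank K (M i ⧸ p i) := by
  set F := LinearMap.pi fun i => (p i).mkQ ∘ₗ f i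
  have hker : LinearMap.ker F = ⨅ i, (p i).comap (f i) := by
    simp only [F, LinearMap.ker_pi, LinearMap.ker_comp, Submodule.ker_mkQ]
  rw [← hker, ← Module.finrank_pi_fintype, ← LinearMap.finrank_range_add_finrank_ker F]
  have := Submodule.finrank_le (LinearMap.range F)
  omega

section ParallelSubspace

variable (K : Type*) {V E M : Type*} [Field K] [AddCommGroup M] [Module K M]

def edgeDisplacement (src tgt : E → V) (e : E) : (V → M) →ₗ[K] M :=
  LinearMap.proj (R := K) (φ := fun _ : V => M) (tgt e) - LinearMap.proj (src e)

@[simp]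
theorem edgeDisplacement_apply (src tgt : E → V) (e : E) (pos : V → M) :
    edgeDisplacement K src tgt e pos = pos (tgt e) - pos (src e) :=
  rfl

def parallelSubspace (src tgt : E → V) (d : E → M) : Submodule K (V → M) :=
  ⨅ e, (K ∙ d e).comap (edgeDisplacement K src tgt e)

variable {K}

theorem mem_parallelSubspace {src tgt : E → V} {d : E → M} {pos : V → M} :
    pos ∈ parallelSubspace K src tgt d ↔ ∀ e, pos (tgt e) - pos (src e) ∈ K ∙ d e := by
  simp [parallelSubspace]

theorem finrank_parallelSubspace [Fintype V] [Fintype E] [FiniteDimensional K M]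
    (src tgt : E → V) {d : E → M} (hd : ∀ e, d e ≠ 0) :
    Fintype.card V * Module.finrank K M + Fintype.card E ≤
      Module.finrank K (parallelSubspace K src tgt d) + Fintype.card E * Module.finrank K M := by
  have hquot (e : E) : Module.finrank K (M ⧸ K ∙ d e) + 1 = Module.finrank K M := by
    rw [← (K ∙ d e).finrank_quotient_add_finrank, finrank_span_singleton (hd e)]
  have hcodim : Module.finrank K (V → M) ≤ Module.finrank K (parallelSubspace K src tgt d) +
      ∑ e, Module.finrank K (M ⧸ K ∙ d e) :=
    Submodule.finrank_le_finrank_iInf_comap_add_sum _ _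
  have hsum : ∑ e, (Module.finrank K (M ⧸ K ∙ d e) + 1) =
      Fintype.card E * Module.finrank K M := by
    simp only [hquot, sum_const, card_univ, smul_eq_mul]
  rw [sum_add_distrib, sum_const, card_univ, smul_eq_mul, mul_one] at hsum
  rw [Module.finrank_pi_fintype, sum_const, card_univ, smul_eq_mul] at hcodim
  omega

end ParallelSubspace

theorem modOfType_eq_inter {V E : Type} {n : ℕ} (src tgt : E → V) (dir : E → Fin n → ℤ)
    {φ : E → Module.Dual ℝ (Fin n → ℝ)} (hφ : ∀ e, φ e (fun i => (dir e i : ℝ)) = 1) :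
    modOfType n src tgt dir = (parallelSubspace ℝ src tgt (fun e i => (dir e i : ℝ)) : Set _) ∩
      {pos | ∀ e, 0 < φ e (edgeDisplacement ℝ src tgt e pos)} := by
  ext pos
  simp only [modOfType, Set.mem_inter_iff, SetLike.mem_coe, mem_parallelSubspace,
    Set.mem_ofPred_eq, edgeDisplacement_apply, ← forall_and,
    ← exists_pos_smul_eq_iff_mem_span_and_pos (hφ _), funext_iff, Pi.sub_apply,
    Pi.smul_apply, smul_eq_mul]

theorem dimension_of_combinatorial_type_general
    (n x g : ℕ) (V E L : Type) [Fintype V] [Fintype E] [Fintype L] [DecidableEq V]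
    (src tgt : E → V) (leg : L → V)
    (dir : E → Fin n → ℤ)
    -- primitive integer direction vectors
    (hprim : ∀ e (c : ℤ), (∀ i, c ∣ dir e i) → IsUnit c)
    -- `Γ` is 3-valent
    (h3 : ∀ v : V,
      (univ.filter fun e : E => src e = v).card +
          (univ.filter fun e : E => tgt e = v).card +
        (univ.filter fun l : L => leg l = v).card = 3)
    -- `x` is the number of ends
    (hx : x = Fintype.card L)
    -- `g` is the genus, `dim H₁(Γ) - dim H₀(Γ) + 1`
    (hg : (g : ℤ) = (Fintype.card E : ℤ) - Fintype.card V + 1) :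
    ∃ (A : AffineSubspace ℝ (V → Fin n → ℝ)) (k : ℕ),
      modOfType n src tgt dir ⊆ (A : Set (V → Fin n → ℝ)) ∧
      Convex ℝ (modOfType n src tgt dir) ∧
      IsOpen {q : A | (q : V → Fin n → ℝ) ∈ modOfType n src tgt dir} ∧
      Module.finrank ℝ A.direction = k ∧
      (x : ℤ) + ((n : ℤ) - 3) * (1 - (g : ℤ)) ≤ (k : ℤ) := by
  have hdir e := intCast_ne_zero_of_forall_dvd_isUnit (R := ℝ) (hprim e)
  choose φ hφ using fun e => Module.Projective.exists_dual_eq_one ℝ (hdir e)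
  set S := parallelSubspace ℝ src tgt fun e i => (dir e i : ℝ)
  obtain ⟨hopen, hconvex⟩ :=
    isOpen_convex_setOf_forall_pos fun e => φ e ∘ₗ edgeDisplacement ℝ src tgt e
  have hmod := modOfType_eq_inter src tgt dir hφ
  refine ⟨S.toAffineSubspace, Module.finrank ℝ S, hmod ▸ Set.inter_subset_left,
    hmod ▸ S.convex.inter hconvex, ?_, by rw [S.toAffineSubspace_direction], ?_⟩
  · convert hopen.preimage continuous_subtype_val using 1
    ext q
    rw [hmod]
    exact and_iff_right (Submodule.mem_toAffineSubspace.mp q.2)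
  · have hcount := two_mul_card_add_card_eq_of_valence src tgt leg 3 h3
    have hdim := finrank_parallelSubspace (K := ℝ) src tgt hdir
    rw [Module.finrank_fin_fun] at hdim
    zify at hcount hdim
    rw [hx, hg]
    linarith

/-- Let `Γ` be a 3-valent graph of genus `g` with `x` ends.  The space of
parameterized tropical curves `Γ → ℝⁿ` in a fixed combinatorial type, up to
equivalence, is an open convex polyhedral domain in a real affine space of dimension
`k` with `k ≥ x + (n-3)(1-g)`. -/
theorem dimension_of_combinatorial_type
    (n x g : ℕ) (V E L : Type) [Fintype V] [Fintype E] [Fintype L] [DecidableEq V]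
    (src tgt : E → V) (leg : L → V) (w : E → ℕ) (wl : L → ℕ)
    (dir : E → Fin n → ℤ) (dirl : L → Fin n → ℤ)
    -- positive natural weights
    (hw : ∀ e, 0 < w e) (hwl : ∀ l, 0 < wl l)
    -- primitive integer direction vectors
    (hprim : ∀ e (c : ℤ), (∀ i, c ∣ dir e i) → IsUnit c)
    (hpriml : ∀ l (c : ℤ), (∀ i, c ∣ dirl l i) → IsUnit c)
    -- `Γ` is 3-valent
    (h3 : ∀ v : V,
      (univ.filter fun e : E => src e = v).card +
          (univ.filter fun e : E => tgt e = v).card +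
        (univ.filter fun l : L => leg l = v).card = 3)
    -- the balancing condition at every vertex
    (hbal : ∀ v : V,
      ((∑ e ∈ univ.filter (fun e => src e = v), (w e : ℤ) • dir e) -
          ∑ e ∈ univ.filter (fun e => tgt e = v), (w e : ℤ) • dir e) +
        ∑ l ∈ univ.filter (fun l => leg l = v), (wl l : ℤ) • dirl l = 0)
    -- `x` is the number of ends
    (hx : x = Fintype.card L)
    -- `g` is the genus, `dim H₁(Γ) - dim H₀(Γ) + 1`
    (hg : (g : ℤ) = (Fintype.card E : ℤ) - Fintype.card V + 1) :
    ∃ (A : AffineSubspace ℝ (V → Fin n → ℝ)) (k : ℕ),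
      modOfType n src tgt dir ⊆ (A : Set (V → Fin n → ℝ)) ∧
      Convex ℝ (modOfType n src tgt dir) ∧
      IsOpen {q : A | (q : V → Fin n → ℝ) ∈ modOfType n src tgt dir} ∧
      Module.finrank ℝ A.direction = k ∧
      (x : ℤ) + ((n : ℤ) - 3) * (1 - (g : ℤ)) ≤ (k : ℤ) :=
  dimension_of_combinatorial_type_general n x g V E L src tgt leg dir hprim h3 hx hg
end

section
/- Let V ⊂ (ℂ*)² be the zero locus of a polynomial F(z₁,z₂) = Σ_{(j,k)∈Δ∩ℤ²} a_{j,k} z₁^j z₂^k with complex coefficients, and let F_trop(y₁,y₂) = max_{(j,k)∈Δ∩ℤ², a_{j,k}≠0} (j y₁ + k y₂ + log|a_{j,k}|) be its tropicalization. Then the amoeba Log(V) = {(log|z₁|, log|z₂|) : (z₁,z₂) ∈ V} is contained in the δ-neighborhood of the corner locus of F_trop, where δ = log(#(Δ∩ℤ²) - 1). -/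
/-!
Let `x = Log z` and let `j` be a monomial of the tropicalization that is maximal at `x`. The
terms of `F(z)` sum to zero, so by the triangle inequality `|a_j z^j|` is at most `#B - 1` times
the largest other term `|a_k z^k|`: at `x` the tropical monomials `j` and `k` differ by at most
`δ`. Along the segment from `x` in the direction `k - j`, which has length at least `1` since
the exponents are integral, `k` overtakes `j` within distance `δ`, and the intermediate value
theorem yields a point of the segment where the maximum of the tropical monomials is attained
twice.
-/

open Finset

/-- `log` of the absolute value of a complex number. -/
noncomputable def logAbs (z : ℂ) : ℝ := Real.log ‖z‖

section CornerLocus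

variable {ι X : Type*} [DecidableEq ι]

def cornerLocus (B : Finset ι) (hB : B.Nonempty) (f : ι → X → ℝ) : Set X :=
  {p | ∃ j ∈ B, ∃ k ∈ B, j ≠ k ∧
    f j p = B.sup' hB (fun i => f i p) ∧ f k p = B.sup' hB (fun i => f i p)}

theorem mem_cornerLocus_of_eq_sup'_erase {B : Finset ι} (hB : B.Nonempty) {f : ι → X → ℝ}
    {p : X} {j : ι} (hj : j ∈ B) (hE : (B.erase j).Nonempty)
    (hjp : (B.erase j).sup' hE (fun i => f i p) = f j p) : p ∈ cornerLocus B hB f := by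
  obtain ⟨k, hkE, hk⟩ := Finset.exists_mem_eq_sup' hE (fun i => f i p)
  have hsup : B.sup' hB (fun i => f i p) = f j p := by
    refine le_antisymm (Finset.sup'_le _ _ fun i hi => ?_) (Finset.le_sup' (fun i => f i p) hj)
    rcases eq_or_ne i j with rfl | hij
    · exact le_rfl
    · exact hjp ▸ Finset.le_sup' (fun i => f i p) (Finset.mem_erase.2 ⟨hij, hi⟩)
  exact ⟨j, hj, k, Finset.mem_of_mem_erase hkE, (Finset.ne_of_mem_erase hkE).symm,
    hsup.symm, by rw [hsup, ← hjp, hk]⟩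

theorem IsPreconnected.exists_mem_cornerLocus [TopologicalSpace X] {s : Set X}
    (hs : IsPreconnected s) {B : Finset ι} (hB : B.Nonempty) {f : ι → X → ℝ}
    (hf : ∀ i ∈ B, ContinuousOn (f i) s)
    {x y : X} (hx : x ∈ s) (hy : y ∈ s) {j k : ι} (hj : j ∈ B) (hk : k ∈ B) (hjk : j ≠ k)
    (hmax : ∀ i ∈ B, f i x ≤ f j x) (hky : f j y ≤ f k y) :
    ∃ p ∈ s, p ∈ cornerLocus B hB f := by
  have hkE : k ∈ B.erase j := Finset.mem_erase.2 ⟨hjk.symm, hk⟩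
  have hE : (B.erase j).Nonempty := ⟨k, hkE⟩
  obtain ⟨p, hps, hp⟩ := hs.intermediate_value₂ hx hy
    (ContinuousOn.finset_sup'_apply hE fun i hi => hf i (Finset.mem_of_mem_erase hi)) (hf j hj)
    (Finset.sup'_le _ _ fun i hi => hmax i (Finset.mem_of_mem_erase hi))
    (hky.trans (Finset.le_sup' (fun i => f i y) hkE))
  exact ⟨p, hps, mem_cornerLocus_of_eq_sup'_erase hB hj hE hp⟩

end CornerLocus

theorem exists_log_norm_sub_le_log_card_sub_one {ι E : Type*} [DecidableEq ι]
    [NormedAddCommGroup E] {B : Finset ι} {w : ι → E} (hw : ∑ i ∈ B, w i = 0) {j : ι}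
    (hj : j ∈ B) (hwj : w j ≠ 0) :
    ∃ k ∈ B.erase j, Real.log ‖w j‖ - Real.log ‖w k‖ ≤ Real.log ((B.card : ℝ) - 1) := by
  have hwj' : 0 < ‖w j‖ := norm_pos_iff.2 hwj
  have hnorm : ‖w j‖ ≤ ∑ i ∈ B.erase j, ‖w i‖ := by
    rw [← norm_neg, ← zero_sub, ← hw, ← Finset.sum_erase_eq_sub hj]
    exact norm_sum_le _ _
  have hE : (B.erase j).Nonempty := by
    by_contra hE
    rw [Finset.not_nonempty_iff_eq_empty.1 hE, Finset.sum_empty] at hnorm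
    linarith
  obtain ⟨k, hkE, hk⟩ := Finset.exists_max_image _ (fun i => ‖w i‖) hE
  have hbound : ‖w j‖ ≤ ((B.card : ℝ) - 1) * ‖w k‖ := by
    calc ‖w j‖ ≤ ∑ i ∈ B.erase j, ‖w i‖ := hnorm
      _ ≤ (B.erase j).card • ‖w k‖ := Finset.sum_le_card_nsmul _ _ _ hk
      _ = ((B.card : ℝ) - 1) * ‖w k‖ := by
        rw [nsmul_eq_mul, Finset.card_erase_of_mem hj,
          Nat.cast_sub (Finset.card_pos.2 ⟨j, hj⟩), Nat.cast_one]
  have hprod := hwj'.trans_le hbound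
  have hwk : 0 < ‖w k‖ :=
    pos_of_mul_pos_right hprod (sub_nonneg.2 (by exact_mod_cast Finset.card_pos.2 ⟨j, hj⟩))
  refine ⟨k, hkE, ?_⟩
  rw [sub_le_iff_le_add, ← Real.log_mul (pos_of_mul_pos_left hprod hwk.le).ne' hwk.ne']
  exact Real.log_le_log hwj' hbound

def tropMonomial (c : ℝ) (j : ℤ × ℤ) (y : ℝ × ℝ) : ℝ := j.1 * y.1 + j.2 * y.2 + c

theorem tropMonomial_add_smul (c : ℝ) (j : ℤ × ℤ) (x v : ℝ × ℝ) (t : ℝ) :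
    tropMonomial c j (x + t • v) = tropMonomial c j x + t * (j.1 * v.1 + j.2 * v.2) := by
  simp only [tropMonomial, Prod.fst_add, Prod.snd_add, Prod.smul_fst, Prod.smul_snd, smul_eq_mul]
  ring

theorem continuous_tropMonomial (c : ℝ) (j : ℤ × ℤ) : Continuous (tropMonomial c j) := by
  unfold tropMonomial
  fun_prop

theorem one_le_sq_add_sq_of_ne {j k : ℤ × ℤ} (h : j ≠ k) :
    1 ≤ ((k.1 - j.1 : ℤ) : ℝ) ^ 2 + ((k.2 - j.2 : ℤ) : ℝ) ^ 2 := by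
  have hne : k.1 - j.1 ≠ 0 ∨ k.2 - j.2 ≠ 0 := by
    by_contra! h'
    exact h (Prod.ext (sub_eq_zero.1 h'.1).symm (sub_eq_zero.1 h'.2).symm)
  have : (1 : ℤ) ≤ (k.1 - j.1) ^ 2 + (k.2 - j.2) ^ 2 := by
    rcases hne with h1 | h1
    · nlinarith [Int.one_le_abs h1, sq_abs (k.1 - j.1), sq_nonneg (k.2 - j.2)]
    · nlinarith [Int.one_le_abs h1, sq_abs (k.2 - j.2), sq_nonneg (k.1 - j.1)]
  exact_mod_cast this

theorem exists_mem_cornerLocus_sqrt_le {B : Finset (ℤ × ℤ)} (hB : B.Nonempty) (c : ℤ × ℤ → ℝ)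
    (x : ℝ × ℝ) {j k : ℤ × ℤ} (hj : j ∈ B) (hk : k ∈ B) (hjk : j ≠ k)
    (hmax : ∀ i ∈ B, tropMonomial (c i) i x ≤ tropMonomial (c j) j x) {δ : ℝ}
    (hδ : tropMonomial (c j) j x - tropMonomial (c k) k x ≤ δ) :
    ∃ y ∈ cornerLocus B hB (fun i => tropMonomial (c i) i),
      √((x.1 - y.1) ^ 2 + (x.2 - y.2) ^ 2) ≤ δ := by
  set gap := tropMonomial (c j) j x - tropMonomial (c k) k x
  set v : ℝ × ℝ := (((k.1 - j.1 : ℤ) : ℝ), ((k.2 - j.2 : ℤ) : ℝ))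
  set N := v.1 ^ 2 + v.2 ^ 2
  have hN : 1 ≤ N := one_le_sq_add_sq_of_ne hjk
  have hgap : 0 ≤ gap := sub_nonneg.2 (hmax k hk)
  have hdiff (t : ℝ) : tropMonomial (c k) k (x + t • v) - tropMonomial (c j) j (x + t • v)
      = t * N - gap := by
    simp only [tropMonomial_add_smul, gap, N, v]
    push_cast
    ring
  have hseg : IsPreconnected ((fun t : ℝ => x + t • v) '' Set.Icc 0 (gap / N)) :=
    isPreconnected_Icc.image _ (by fun_prop)
  obtain ⟨_, ⟨t, ⟨ht0, htN⟩, rfl⟩, hy⟩ := hseg.exists_mem_cornerLocus hB (x := x)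
    (fun i _ => (continuous_tropMonomial (c i) i).continuousOn)
    ⟨0, ⟨le_rfl, by positivity⟩, by simp⟩
    ⟨gap / N, ⟨by positivity, le_rfl⟩, rfl⟩ hj hk hjk (by simpa using hmax)
    (by have := hdiff (gap / N); field_simp at this; linarith)
  refine ⟨_, hy, ?_⟩
  have htN' : t * N ≤ gap := (le_div_iff₀ (by linarith)).1 htN
  rw [Real.sqrt_le_left (hgap.trans hδ)]
  have hdist : (x.1 - (x + t • v).1) ^ 2 + (x.2 - (x + t • v).2) ^ 2 = t * (t * N) := by
    simp only [Prod.fst_add, Prod.snd_add, Prod.smul_fst, Prod.smul_snd, smul_eq_mul, N]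
    ring
  rw [hdist]
  have ht : t ≤ gap := by nlinarith
  calc t * (t * N) ≤ gap * gap := mul_le_mul ht htN' (by positivity) hgap
    _ ≤ δ ^ 2 := by nlinarith

theorem log_norm_monomial_eq_tropMonomial {c : ℂ} (hc : c ≠ 0) (j : ℤ × ℤ) {z : ℂ × ℂ}
    (hz1 : z.1 ≠ 0) (hz2 : z.2 ≠ 0) :
    Real.log ‖c * z.1 ^ j.1 * z.2 ^ j.2‖ = tropMonomial (logAbs c) j (logAbs z.1, logAbs z.2) := by
  have h1 : ‖z.1‖ ^ j.1 ≠ 0 := zpow_ne_zero _ (norm_ne_zero_iff.2 hz1)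
  have h2 : ‖z.2‖ ^ j.2 ≠ 0 := zpow_ne_zero _ (norm_ne_zero_iff.2 hz2)
  have hc' : ‖c‖ ≠ 0 := norm_ne_zero_iff.2 hc
  rw [norm_mul, norm_mul, norm_zpow, norm_zpow, Real.log_mul (mul_ne_zero hc' h1) h2,
    Real.log_mul hc' h1, Real.log_zpow, Real.log_zpow, tropMonomial, logAbs, logAbs, logAbs]
  ring

/-- Let `V ⊆ (ℂ*)²` be the zero locus of a Laurent polynomial
`F(z₁,z₂) = Σ_{(j,k) ∈ Δ ∩ ℤ²} a_{j,k} z₁ʲ z₂ᵏ` and let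
`F_trop(y₁,y₂) = max_{a_{j,k} ≠ 0} (j y₁ + k y₂ + log|a_{j,k}|)` be its tropicalization.
Then the amoeba `Log(V)` is contained in the `δ`-neighborhood (Euclidean metric on
`ℝ²`) of the corner locus of `F_trop`, where `δ = log(#(Δ ∩ ℤ²) - 1)`. -/
theorem amoeba_in_neighborhood_of_tropicalization
    (A : Finset (ℤ × ℤ)) (a : ℤ × ℤ → ℂ)
    -- `B` is the support of the polynomial inside `Δ ∩ ℤ² = A`
    (B : Finset (ℤ × ℤ)) (hB : ∀ j, j ∈ B ↔ j ∈ A ∧ a j ≠ 0) (hBne : B.Nonempty)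
    -- a point of the curve `V`
    (z : ℂ × ℂ) (hz1 : z.1 ≠ 0) (hz2 : z.2 ≠ 0)
    (hzV : (∑ j ∈ A, a j * z.1 ^ j.1 * z.2 ^ j.2) = 0) :
    -- there is a point `y` of the corner locus of `F_trop` within distance `δ` of `Log z`
    ∃ y : ℝ × ℝ,
      (∃ j ∈ B, ∃ k ∈ B, j ≠ k ∧
        (j.1 : ℝ) * y.1 + (j.2 : ℝ) * y.2 + logAbs (a j) =
          B.sup' hBne (fun j' => (j'.1 : ℝ) * y.1 + (j'.2 : ℝ) * y.2 + logAbs (a j')) ∧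
        (k.1 : ℝ) * y.1 + (k.2 : ℝ) * y.2 + logAbs (a k) =
          B.sup' hBne (fun j' => (j'.1 : ℝ) * y.1 + (j'.2 : ℝ) * y.2 + logAbs (a j'))) ∧
      Real.sqrt ((logAbs z.1 - y.1) ^ 2 + (logAbs z.2 - y.2) ^ 2) ≤
        Real.log ((A.card : ℝ) - 1) := by
  set x : ℝ × ℝ := (logAbs z.1, logAbs z.2)
  set w : ℤ × ℤ → ℂ := fun i => a i * z.1 ^ i.1 * z.2 ^ i.2
  have hlog (i : ℤ × ℤ) (hi : i ∈ B) : Real.log ‖w i‖ = tropMonomial (logAbs (a i)) i x :=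
    log_norm_monomial_eq_tropMonomial ((hB i).1 hi).2 i hz1 hz2
  have hw : ∑ i ∈ B, w i = 0 := by
    rw [Finset.sum_subset (fun i hi => ((hB i).1 hi).1) fun i hiA hiB => ?_, hzV]
    simp [w, show a i = 0 by by_contra h; exact hiB ((hB i).2 ⟨hiA, h⟩)]
  obtain ⟨j, hj, hmax⟩ :=
    Finset.exists_max_image B (fun i => tropMonomial (logAbs (a i)) i x) hBne
  have hwj : w j ≠ 0 :=
    mul_ne_zero (mul_ne_zero ((hB j).1 hj).2 (zpow_ne_zero _ hz1)) (zpow_ne_zero _ hz2)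
  obtain ⟨k, hkE, hgap⟩ := exists_log_norm_sub_le_log_card_sub_one hw hj hwj
  have hk := Finset.mem_of_mem_erase hkE
  have hjk := (Finset.ne_of_mem_erase hkE).symm
  rw [hlog j hj, hlog k hk] at hgap
  have hcard : Real.log ((B.card : ℝ) - 1) ≤ Real.log ((A.card : ℝ) - 1) := by
    have h2 : (2 : ℝ) ≤ B.card := by exact_mod_cast Finset.one_lt_card.2 ⟨j, hj, k, hk, hjk⟩
    have hBA : (B.card : ℝ) ≤ A.card := by
      exact_mod_cast Finset.card_le_card fun i hi => ((hB i).1 hi).1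
    exact Real.log_le_log (by linarith) (by linarith)
  exact exists_mem_cornerLocus_sqrt_le hBne (fun i => logAbs (a i)) x hj hk hjk hmax
    (hgap.trans hcard)
end
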